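/- Let w be a nonoverlapping word and X₁,…,Xₙ i.i.d. over finite alphabet A with law P. Then for every t ≥ 1, the t-th moment of the occurrence count satisfies E[N(w; X₁…Xₙ)^t] = Σ_{s=1}^{min(⌊n/|w|⌋, t)} A_{t,s} · C(n - s|w| + s, s) · P(w)^s, where A_{t,s} = Σ_{r=0}^{s} C(s, r) · r^t · (-1)^{s-r} is the number of surjections from a t-element set onto an s-element set. -/

import Mathlib

open Finset
open scoped BigOperators Classical

noncomputable section

/-- Number of occurrences of the word `w` in the string `x`. -/
def occCount {A : Type*} [DecidableEq A] (w x : List A) : ℕ :=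
  (List.range (x.length + 1 - w.length)).countP
    (fun i => decide (List.take w.length (List.drop i x) = w))

/-- A word is nonoverlapping if no string of length `< 2|w|` contains two occurrences. -/
def Nonoverlapping {A : Type*} [DecidableEq A] (w : List A) : Prop :=
  ¬ ∃ z : List A, z.length < 2 * w.length ∧ 2 ≤ occCount w z

/-- Probability of a word under the i.i.d. letter law `P`. -/
def wordProb {A : Type*} (P : A → ℝ) (w : List A) : ℝ := (w.map P).prod

/-- Probability of the event `E` for `n` i.i.d. letters with law `P`. -/
def strProb {A : Type*} [Fintype A] (P : A → ℝ) (n : ℕ)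
    (E : (Fin n → A) → Prop) : ℝ :=
  ∑ x : Fin n → A, if E x then (∏ i, P (x i)) else 0



def surjF (t s : ℕ) : ℕ := Fintype.card {f : Fin t → Fin s // Function.Surjective f}

lemma surjF_eq_zero {t s : ℕ} (h : t < s) : surjF t s = 0 := by
  rw [surjF, Fintype.card_eq_zero_iff]
  constructor
  rintro ⟨f, hf⟩
  have := Fintype.card_le_of_surjective f hf
  simp at this
  omega

lemma fiber_card {t k : ℕ} (S : Finset (Fin k)) :
    ((univ : Finset (Fin t → Fin k)).filter (fun f => univ.image f = S)).card
      = surjF t S.card := by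
  rw [← Fintype.card_subtype, surjF]
  let σ : {x // x ∈ S} ≃ Fin S.card := S.equivFin
  refine Fintype.card_congr ?_
  refine
    { toFun := fun f => ⟨fun a => σ ⟨f.1 a, ?_⟩, ?_⟩
      invFun := fun g => ⟨fun a => (σ.symm (g.1 a)).1, ?_⟩
      left_inv := ?_, right_inv := ?_ }
  · have h := mem_image_of_mem f.1 (mem_univ a)
    rwa [f.2] at h
  · intro b
    have hy : (σ.symm b).1 ∈ image f.1 univ := by rw [f.2]; exact (σ.symm b).2
    obtain ⟨a, -, ha⟩ := mem_image.1 hy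
    refine ⟨a, ?_⟩
    have h2 : (⟨f.1 a, by rw [ha]; exact (σ.symm b).2⟩ : {x // x ∈ S})
        = σ.symm b := Subtype.ext ha
    show σ _ = b
    rw [h2]
    simp
  · ext y
    simp only [mem_image, mem_univ, true_and]
    constructor
    · rintro ⟨a, rfl⟩; exact (σ.symm (g.1 a)).2
    · intro hy
      obtain ⟨a, ha⟩ := g.2 (σ ⟨y, hy⟩)
      refine ⟨a, ?_⟩
      rw [ha]
      simp
  · rintro ⟨f, hf⟩
    ext a
    simp
  · rintro ⟨g, hg⟩
    ext a
    simp [σ]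

lemma sum_choose_surj (t k : ℕ) :
    k ^ t = ∑ s ∈ range (k + 1), k.choose s * surjF t s := by
  have h1 : (univ : Finset (Fin t → Fin k)).card = k ^ t := by
    simp [card_univ]
  rw [← h1]
  rw [card_eq_sum_card_fiberwise (f := fun f : Fin t → Fin k => univ.image f)
    (t := (univ : Finset (Fin k)).powerset) (fun f _ => mem_powerset.2 (subset_univ _))]
  have h2 : ∀ S ∈ (univ : Finset (Fin k)).powerset,
      ((univ : Finset (Fin t → Fin k)).filter (fun f => univ.image f = S)).card
        = surjF t S.card := fun S _ => fiber_card S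
  rw [sum_congr rfl h2]
  have := Finset.sum_powerset_apply_card (fun s => surjF t s) (x := (univ : Finset (Fin k)))
  rw [this]
  simp [card_univ, mul_comm]




def surR (t s : ℕ) : ℝ := ∑ r ∈ range (s + 1), (-1 : ℝ) ^ (s - r) * (s.choose r : ℕ) * (r : ℝ) ^ t

lemma alt_partial {K : ℕ} (hK : 1 ≤ K) :
    ∑ j ∈ range K, (-1 : ℝ) ^ j * (K.choose j : ℕ) = -(-1 : ℝ) ^ K := by
  have h := Int.alternating_sum_range_choose_of_ne (n := K) (by omega)
  have h2 : ((∑ i ∈ range (K + 1), (-1 : ℤ) ^ i * (K.choose i : ℤ) : ℤ) : ℝ) = 0 := by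
    rw [h]; norm_num
  push_cast at h2
  rw [sum_range_succ] at h2
  simp only [Nat.choose_self, Nat.cast_one, mul_one] at h2
  linarith

lemma surjF_real (t : ℕ) : ∀ s, (surjF t s : ℝ) = surR t s := by
  intro s
  induction s using Nat.strong_induction_on with
  | _ s IH =>
  have hA := sum_choose_surj t s
  have hA' : ((s : ℝ)) ^ t
      = ∑ r ∈ range s, (s.choose r : ℝ) * (surjF t r : ℝ) + (surjF t s : ℝ) := by
    have h0 : ((s ^ t : ℕ) : ℝ) = ((∑ r ∈ range (s+1), s.choose r * surjF t r : ℕ) : ℝ) := by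
      exact_mod_cast congrArg (fun z : ℕ => (z : ℝ)) hA
    push_cast at h0
    rw [h0, sum_range_succ, Nat.choose_self]
    push_cast; ring
  have key : ∑ r ∈ range s, (s.choose r : ℝ) * (surjF t r : ℝ)
      = ∑ q ∈ range s, -((-1 : ℝ) ^ (s - q) * ((s.choose q : ℕ) : ℝ) * (q : ℝ) ^ t) := by
    have e1 : ∀ r ∈ range s, (s.choose r : ℝ) * (surjF t r : ℝ)
        = ∑ q ∈ range s, (s.choose r : ℝ) * ((-1:ℝ)^(r-q) * ((r.choose q : ℕ) : ℝ) * (q:ℝ)^t) := by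
      intro r hr
      rw [IH r (mem_range.1 hr), surR, mul_sum]
      refine sum_subset (range_subset_range.2 (mem_range.1 hr)) ?_
      intro q hq hq2
      have : r < q := by simp only [mem_range] at hq hq2; omega
      rw [Nat.choose_eq_zero_of_lt this]
      simp
    rw [sum_congr rfl e1, sum_comm]
    refine sum_congr rfl fun q hq => ?_
    have hq' : q < s := mem_range.1 hq
    have e2 : ∑ r ∈ range s, (s.choose r : ℝ) * ((-1:ℝ)^(r-q) * ((r.choose q : ℕ) : ℝ) * (q:ℝ)^t)
        = ∑ r ∈ Ico q s, (s.choose r : ℝ) * ((-1:ℝ)^(r-q) * ((r.choose q : ℕ) : ℝ) * (q:ℝ)^t) := by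
      refine (sum_subset ?_ ?_).symm
      · intro r hrm; simp only [mem_Ico] at hrm; simp only [mem_range]; omega
      · intro r hrm hrm2
        have : r < q := by simp only [mem_range] at hrm; simp only [mem_Ico] at hrm2; omega
        rw [Nat.choose_eq_zero_of_lt this]; simp
    rw [e2, Finset.sum_Ico_eq_sum_range]
    have e3 : ∀ j ∈ range (s - q),
        ((s.choose (q+j) : ℝ)) * ((-1:ℝ)^((q+j)-q) * (((q+j).choose q : ℕ) : ℝ) * (q:ℝ)^t)
        = (((s.choose q : ℕ) : ℝ) * (q:ℝ)^t) * ((-1:ℝ)^j * (((s-q).choose j : ℕ) : ℝ)) := by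
      intro j hj
      have hj' : j < s - q := mem_range.1 hj
      have hc : (s.choose (q+j)) * ((q+j).choose q) = s.choose q * ((s-q).choose ((q+j)-q)) :=
        Nat.choose_mul (by omega)
      have hjq : (q + j) - q = j := by omega
      rw [hjq] at hc
      have hc' : ((s.choose (q+j) : ℕ) : ℝ) * (((q+j).choose q : ℕ) : ℝ)
          = ((s.choose q : ℕ) : ℝ) * (((s-q).choose j : ℕ) : ℝ) := by exact_mod_cast congrArg (fun z : ℕ => (z : ℝ)) hc
      rw [hjq]
      linear_combination ((-1:ℝ)^j * (q:ℝ)^t) * hc'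
    rw [sum_congr rfl e3, ← mul_sum, alt_partial (by omega)]
    ring
  rw [key] at hA'
  rw [surR, sum_range_succ]
  simp only [Nat.sub_self, pow_zero, Nat.choose_self, Nat.cast_one, one_mul, mul_one]
  rw [sum_neg_distrib] at hA'
  linarith

lemma pow_eq_sum (t k : ℕ) :
    ((k : ℝ)) ^ t = ∑ s ∈ range (t + 1), surR t s * (k.choose s : ℕ) := by
  have h0 : ((k : ℝ)) ^ t = ∑ s ∈ range (k+1), (k.choose s : ℝ) * (surjF t s : ℝ) := by
    have := congrArg (fun z : ℕ => (z : ℝ)) (sum_choose_surj t k)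
    push_cast at this
    exact this
  have h1 : ∑ s ∈ range (k+1), (k.choose s : ℝ) * (surjF t s : ℝ)
      = ∑ s ∈ range (max k t + 1), (k.choose s : ℝ) * (surjF t s : ℝ) := by
    refine sum_subset (range_subset_range.2 (by omega)) ?_
    intro s hs hs2
    have : k < s := by simp only [mem_range] at hs hs2; omega
    rw [Nat.choose_eq_zero_of_lt this]; simp
  have h2 : ∑ s ∈ range (t+1), (k.choose s : ℝ) * (surjF t s : ℝ)
      = ∑ s ∈ range (max k t + 1), (k.choose s : ℝ) * (surjF t s : ℝ) := by
    refine sum_subset (range_subset_range.2 (by omega)) ?_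
    intro s hs hs2
    have : t < s := by simp only [mem_range] at hs hs2; omega
    rw [surjF_eq_zero this]; simp
  rw [h0, h1, ← h2]
  refine sum_congr rfl fun s _ => ?_
  rw [surjF_real, mul_comm]



lemma countP_range_eq {p : ℕ → Prop} [DecidablePred p] (K : ℕ) :
    (List.range K).countP (fun i => decide (p i)) = ((Finset.range K).filter p).card := by
  induction K with
  | zero => simp
  | succ K IH =>
    rw [List.range_succ, List.countP_append, Finset.range_add_one,
      Finset.filter_insert]
    by_cases h : p K
    · rw [if_pos h, Finset.card_insert_of_notMem (by simp)]
      simp [h, IH]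
    · rw [if_neg h]
      simp [h, IH]

lemma occCount_eq {A : Type*} [DecidableEq A] (w x : List A) :
    occCount w x
      = ((Finset.range (x.length + 1 - w.length)).filter
          (fun i => List.take w.length (List.drop i x) = w)).card := by
  rw [occCount, countP_range_eq]

lemma occ_iff {A : Type*} [DecidableEq A] (w l : List A) (hw : w ≠ []) (i : ℕ)
    (h : i + w.length ≤ l.length) :
    List.take w.length (List.drop i l) = w
      ↔ ∀ k < w.length, l.getD (i + k) (w.head hw) = w.getD k (w.head hw) := by
  constructor
  · intro he k hk
    have h1 : (List.take w.length (List.drop i l)).getD k (w.head hw)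
        = w.getD k (w.head hw) := by rw [he]
    rw [List.getD_eq_getElem?_getD] at h1 ⊢
    rw [List.getElem?_take_of_lt hk, List.getElem?_drop] at h1
    exact h1
  · intro hk
    apply List.ext_getElem
    · rw [List.length_take, List.length_drop]; omega
    · intro k h1 h2
      rw [List.getElem_take, List.getElem_drop]
      have e1 : l[i+k] = l.getD (i+k) (w.head hw) := by
        rw [List.getD_eq_getElem]
      have e2 : w[k] = w.getD k (w.head hw) := by rw [List.getD_eq_getElem]
      rw [e1, e2]
      exact hk k h2

lemma two_occ_false {A : Type*} [DecidableEq A] (w l : List A)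
    (hno : Nonoverlapping w) (hw : w ≠ []) {i j : ℕ}
    (hij : i < j) (hjm : j < i + w.length) (hjl : j + w.length ≤ l.length)
    (hoi : List.take w.length (List.drop i l) = w)
    (hoj : List.take w.length (List.drop j l) = w) : False := by
  set m := w.length with hm
  have hm1 : 1 ≤ m := List.length_pos_iff.2 hw
  set z := List.take (j - i + m) (List.drop i l) with hz
  have hzlen : z.length = j - i + m := by
    rw [hz, List.length_take, List.length_drop]; omega
  apply hno
  refine ⟨z, by omega, ?_⟩
  rw [occCount_eq, hzlen, ← hm]
  have hmem0 : (0 : ℕ) ∈ (Finset.range (j - i + m + 1 - m)).filter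
      (fun a => List.take m (List.drop a z) = w) := by
    rw [Finset.mem_filter]
    refine ⟨by simp, ?_⟩
    rw [List.drop_zero, hz, List.take_take, min_eq_left (by omega)]
    exact hoi
  have hmemj : (j - i) ∈ (Finset.range (j - i + m + 1 - m)).filter
      (fun a => List.take m (List.drop a z) = w) := by
    rw [Finset.mem_filter]
    refine ⟨by simp; omega, ?_⟩
    rw [hz, List.drop_take, List.drop_drop]
    have : j - i + m - (j - i) = m := by omega
    rw [this]
    rw [show i + (j - i) = j by omega, List.take_take, min_eq_left (le_refl m)]
    exact hoj
  have : 1 < ((Finset.range (j - i + m + 1 - m)).filter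
      (fun a => List.take m (List.drop a z) = w)).card :=
    Finset.one_lt_card.2 ⟨0, hmem0, j - i, hmemj, by omega⟩
  omega

lemma wordProb_list {A : Type*} (P : A → ℝ) (w : List A) (d : A) :
    (w.map P).prod = ∏ k ∈ Finset.range w.length, P (w.getD k d) := by
  induction w with
  | nil => simp
  | cons h t IH =>
    rw [List.map_cons, List.prod_cons, List.length_cons, Finset.prod_range_succ']
    simp only [List.getD_cons_succ, List.getD_cons_zero]
    rw [← IH, mul_comm]



def spacedS (m : ℕ) (S : Finset ℕ) : Prop := ∀ i ∈ S, ∀ j ∈ S, i < j → i + m ≤ j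

lemma prob_not_spaced {A : Type*} [Fintype A] [DecidableEq A] (P : A → ℝ)
    (w : List A) (hw : w ≠ []) (hno : Nonoverlapping w) (n : ℕ) (S : Finset ℕ)
    (hS : S ⊆ Finset.range (n + 1 - w.length)) (hnsp : ¬ spacedS w.length S) :
    ∑ x : Fin n → A, (if ∀ i ∈ S, List.take w.length (List.drop i (List.ofFn x)) = w
      then ∏ i, P (x i) else 0) = 0 := by
  rw [Finset.sum_eq_zero]
  intro x _
  rw [if_neg]
  intro hev
  rw [spacedS] at hnsp
  push_neg at hnsp
  obtain ⟨i, hiS, j, hjS, hij, hjm⟩ := hnsp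
  have hjr := Finset.mem_range.1 (hS hjS)
  exact two_occ_false w (List.ofFn x) hno hw hij hjm
    (by rw [List.length_ofFn]; omega) (hev i hiS) (hev j hjS)

lemma prob_spaced {A : Type*} [Fintype A] [DecidableEq A] (P : A → ℝ)
    (hP1 : ∑ a, P a = 1) (w : List A) (hw : w ≠ []) (n : ℕ) (S : Finset ℕ)
    (hS : S ⊆ Finset.range (n + 1 - w.length)) (hsp : spacedS w.length S) :
    ∑ x : Fin n → A, (if ∀ i ∈ S, List.take w.length (List.drop i (List.ofFn x)) = w
      then ∏ i, P (x i) else 0) = wordProb P w ^ S.card := by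
  set m := w.length with hm
  set d := w.head hw with hd
  set cov : Finset (ℕ × ℕ) := S ×ˢ Finset.range m with hcov
  have hmemcov : ∀ p : ℕ × ℕ, p ∈ cov ↔ p.1 ∈ S ∧ p.2 < m := by
    intro p; rw [hcov, Finset.mem_product, Finset.mem_range]
  have hlt : ∀ p ∈ cov, p.1 + p.2 < n ∧ p.1 + m ≤ n := by
    intro p hp
    obtain ⟨h1, h2⟩ := (hmemcov p).1 hp
    have := Finset.mem_range.1 (hS h1)
    omega
  have hinj : ∀ p ∈ cov, ∀ q ∈ cov, p.1 + p.2 = q.1 + q.2 → p = q := by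
    intro p hp q hq he
    obtain ⟨hp1, hp2⟩ := (hmemcov p).1 hp
    obtain ⟨hq1, hq2⟩ := (hmemcov q).1 hq
    have h1 : p.1 = q.1 := by
      rcases lt_trichotomy p.1 q.1 with h | h | h
      · have := hsp p.1 hp1 q.1 hq1 h; omega
      · exact h
      · have := hsp q.1 hq1 p.1 hp1 h; omega
    have h2 : p.2 = q.2 := by omega
    exact Prod.ext h1 h2
  set φ : ℕ → A → ℝ := fun i a =>
    if (∀ p ∈ cov, p.1 + p.2 = i → w.getD p.2 d = a) then P a else 0 with hφ
  have step1 : ∀ x : Fin n → A,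
      (if ∀ i ∈ S, List.take m (List.drop i (List.ofFn x)) = w
        then ∏ i, P (x i) else 0) = ∏ i : Fin n, φ i.1 (x i) := by
    intro x
    by_cases hev : ∀ i ∈ S, List.take m (List.drop i (List.ofFn x)) = w
    · rw [if_pos hev]
      refine Finset.prod_congr rfl fun i _ => ?_
      rw [hφ]
      simp only
      rw [if_pos]
      intro p hp hpe
      obtain ⟨hp1, hp2⟩ := (hmemcov p).1 hp
      have hocc := (occ_iff w (List.ofFn x) hw p.1
        (by rw [List.length_ofFn]; exact (hlt p hp).2)).1 (hev p.1 hp1) p.2 hp2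
      rw [← hd] at hocc
      rw [← hocc]
      rw [List.getD_eq_getElem _ _ (by rw [List.length_ofFn]; exact hpe ▸ i.2)]
      rw [List.getElem_ofFn]
      congr 1
      exact Fin.ext (by simpa using hpe)
    · rw [if_neg hev]
      push_neg at hev
      obtain ⟨j, hjS, hocc⟩ := hev
      have hjn : j + m ≤ n := by
        have := Finset.mem_range.1 (hS hjS); omega
      rw [hm] at hocc
      have hocc2 : ¬ ∀ k < w.length,
          (List.ofFn x).getD (j + k) (w.head hw) = w.getD k (w.head hw) := fun hall =>
        hocc ((occ_iff w (List.ofFn x) hw j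
          (by rw [List.length_ofFn]; omega)).2 hall)
      push_neg at hocc2
      obtain ⟨k, hk, hne⟩ := hocc2
      rw [← hm] at hk
      symm
      refine Finset.prod_eq_zero (Finset.mem_univ (⟨j + k, by omega⟩ : Fin n)) ?_
      rw [hφ]
      simp only
      rw [if_neg]
      intro hcond
      apply hne
      have := hcond (j, k) ((hmemcov (j,k)).2 ⟨hjS, hk⟩) rfl
      rw [List.getD_eq_getElem _ _ (by rw [List.length_ofFn]; omega)]
      rw [List.getElem_ofFn]
      exact this.symm
  rw [Finset.sum_congr rfl fun x _ => step1 x]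
  have step2 : ∑ x : Fin n → A, ∏ i : Fin n, φ i.1 (x i)
      = ∏ i : Fin n, ∑ a, φ i.1 a := by
    rw [Finset.prod_univ_sum]
    rw [Fintype.piFinset_univ]
  rw [step2]
  set g : ℕ → ℝ := fun i => ∑ a, φ i a with hg
  rw [show (∏ i : Fin n, ∑ a, φ i.1 a) = ∏ i : Fin n, g i.1 from rfl]
  rw [Fin.prod_univ_eq_prod_range g n]
  set T : Finset ℕ := cov.image (fun p => p.1 + p.2) with hT
  have hTsub : T ⊆ Finset.range n := by
    intro i hi
    obtain ⟨p, hp, rfl⟩ := Finset.mem_image.1 hi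
    exact Finset.mem_range.2 (hlt p hp).1
  have houtside : ∀ i ∈ Finset.range n, i ∉ T → g i = 1 := by
    intro i _ hiT
    rw [hg]
    simp only
    have : ∀ a, φ i a = P a := by
      intro a
      rw [hφ]
      simp only
      rw [if_pos]
      intro p hp hpe
      exact absurd (Finset.mem_image.2 ⟨p, hp, hpe⟩) hiT
    rw [Finset.sum_congr rfl fun a _ => this a]
    exact hP1
  rw [← Finset.prod_subset hTsub houtside]
  rw [hT, Finset.prod_image hinj]
  have hcovval : ∀ p ∈ cov, g (p.1 + p.2) = P (w.getD p.2 d) := by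
    intro p hp
    have : ∀ a, φ (p.1 + p.2) a = if w.getD p.2 d = a then P a else 0 := by
      intro a
      rw [hφ]
      simp only
      congr 1
      apply propext
      constructor
      · intro h; exact h p hp rfl
      · intro h q hq hqe
        rw [hinj q hq p hp hqe]
        exact h
    rw [hg]
    simp only
    rw [Finset.sum_congr rfl fun a _ => this a]
    rw [Finset.sum_ite_eq]
    simp
  rw [Finset.prod_congr rfl hcovval]
  rw [hcov, Finset.prod_product]
  have : ∀ j ∈ S, ∏ k ∈ Finset.range m, P (w.getD k d) = wordProb P w := by
    intro j _
    rw [wordProb, wordProb_list P w d, hm]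
  rw [Finset.prod_congr rfl this, Finset.prod_const]


lemma emul {m : ℕ} (hm : 1 ≤ m) (k : ℕ) : k * (m - 1) + k = k * m := by
  cases m with
  | zero => omega
  | succ m' => simp [Nat.mul_succ]

lemma image_orderEmbOfFin {s : ℕ} (S : Finset ℕ) (hc : S.card = s) :
    Finset.image (fun k => S.orderEmbOfFin hc k) Finset.univ = S := by
  apply Finset.coe_injective
  rw [Finset.coe_image, Finset.coe_univ, Set.image_univ]
  exact Finset.range_orderEmbOfFin S hc

lemma growth {m s : ℕ} {S : Finset ℕ} (hc : S.card = s) (hsp : spacedS m S) :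
    ∀ (d : ℕ) (a b : Fin s), b.1 = a.1 + d →
      S.orderEmbOfFin hc a + d * m ≤ S.orderEmbOfFin hc b := by
  intro d
  induction d with
  | zero =>
    intro a b hab
    have : a = b := Fin.ext (by omega)
    subst this
    simp
  | succ d IH =>
    intro a b hab
    have hb' : a.1 + d < s := by have := b.2; omega
    set b' : Fin s := ⟨a.1 + d, hb'⟩ with hb'def
    have h1 := IH a b' rfl
    have hlt : S.orderEmbOfFin hc b' < S.orderEmbOfFin hc b :=
      (S.orderEmbOfFin hc).strictMono (Fin.mk_lt_mk.2 (by omega) : b' < ⟨b.1, b.2⟩)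
    have h2 := hsp _ (S.orderEmbOfFin_mem hc b') _ (S.orderEmbOfFin_mem hc b) hlt
    have e : (d + 1) * m = d * m + m := by rw [Nat.add_mul, one_mul]
    omega

lemma growth0 {m s : ℕ} {S : Finset ℕ} (hc : S.card = s) (hsp : spacedS m S) (k : Fin s) :
    k.1 * m ≤ S.orderEmbOfFin hc k := by
  have hpos : 0 < s := by have := k.2; omega
  have := growth hc hsp k.1 ⟨0, hpos⟩ k (by simp)
  omega

lemma spaced_bound {m n s : ℕ} (hm : 1 ≤ m) {S : Finset ℕ}
    (hsub : S ⊆ Finset.range (n + 1 - m)) (hc : S.card = s) (hsp : spacedS m S)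
    (hs : 1 ≤ s) : s * m ≤ n := by
  have hslt : s - 1 < s := by omega
  have hlast := growth0 hc hsp ⟨s - 1, hslt⟩
  have hv : ((⟨s - 1, hslt⟩ : Fin s) : ℕ) = s - 1 := rfl
  rw [hv] at hlast
  have hmem := S.orderEmbOfFin_mem hc ⟨s - 1, hslt⟩
  have hr := Finset.mem_range.1 (hsub hmem)
  have e : s * m = (s - 1) * m + m := by
    cases s with
    | zero => omega
    | succ s' => simp [Nat.succ_mul]
  omega

def fwdMap (m s : ℕ) (S : Finset ℕ) (hc : S.card = s) : Finset ℕ :=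
  Finset.image (fun k : Fin s => S.orderEmbOfFin hc k - k.1 * (m - 1)) Finset.univ

lemma fwd_strictMono {m s : ℕ} (hm : 1 ≤ m) {S : Finset ℕ} (hc : S.card = s)
    (hsp : spacedS m S) :
    StrictMono (fun k : Fin s => S.orderEmbOfFin hc k - k.1 * (m - 1)) := by
  intro a b hab
  simp only
  have h3 := growth hc hsp (b.1 - a.1) a b (by have := Fin.lt_def.1 hab; omega)
  have hd : 1 ≤ b.1 - a.1 := by have := Fin.lt_def.1 hab; omega
  have e1 := emul hm a.1
  have e2 := emul hm b.1
  have e3 : (b.1 - a.1) * m + a.1 * m = b.1 * m := by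
    rw [← Nat.add_mul]; congr 1; omega
  have e4 : 1 * m ≤ (b.1 - a.1) * m := Nat.mul_le_mul_right m hd
  have h1 := growth0 hc hsp a
  have h2 := growth0 hc hsp b
  omega

lemma fwd_card {m s : ℕ} (hm : 1 ≤ m) {S : Finset ℕ} (hc : S.card = s)
    (hsp : spacedS m S) : (fwdMap m s S hc).card = s := by
  rw [fwdMap, Finset.card_image_of_injective _ (fwd_strictMono hm hc hsp).injective,
    Finset.card_univ, Fintype.card_fin]

lemma fwd_sub {m n s : ℕ} (hm : 1 ≤ m) (hsm : s * m ≤ n) {S : Finset ℕ}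
    (hsub : S ⊆ Finset.range (n + 1 - m)) (hc : S.card = s) (hsp : spacedS m S) :
    fwdMap m s S hc ⊆ Finset.range (n - s * m + s) := by
  intro y hy
  rw [fwdMap] at hy
  obtain ⟨k, -, rfl⟩ := Finset.mem_image.1 hy
  rw [Finset.mem_range]
  have hslt : s - 1 < s := by have := k.2; omega
  have h3 := growth hc hsp (s - 1 - k.1) k ⟨s - 1, hslt⟩ (by
    show s - 1 = k.1 + (s - 1 - k.1)
    have := k.2; omega)
  have hmem := S.orderEmbOfFin_mem hc ⟨s - 1, hslt⟩
  have hr := Finset.mem_range.1 (hsub hmem)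
  have e1 := emul hm k.1
  have e3 : (s - 1 - k.1) * m + k.1 * m = (s - 1) * m := by
    rw [← Nat.add_mul]; congr 1; have := k.2; omega
  have e5 : s * m = (s - 1) * m + m := by
    cases s with
    | zero => exact absurd k.2 (by omega)
    | succ s' => simp [Nat.succ_mul]
  have h1 := growth0 hc hsp k
  omega

lemma card_spaced {m n s : ℕ} (hm : 1 ≤ m) (hsm : s * m ≤ n) :
    (((Finset.range (n + 1 - m)).powersetCard s).filter (spacedS m)).card
      = (n - s * m + s).choose s := by
  rw [← Finset.card_range (n - s * m + s), ← Finset.card_powersetCard]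
  refine Finset.card_bij
    (fun S hS => fwdMap m s S (Finset.mem_powersetCard.1 (Finset.mem_filter.1 hS).1).2)
    ?_ ?_ ?_
  · -- maps into target
    intro S hS
    obtain ⟨hSmem, hSsp⟩ := Finset.mem_filter.1 hS
    obtain ⟨hsub, hc⟩ := Finset.mem_powersetCard.1 hSmem
    show fwdMap m s S hc ∈ _
    rw [Finset.mem_powersetCard]
    exact ⟨fwd_sub hm hsm hsub hc hSsp, fwd_card hm hc hSsp⟩
  · -- injectivity
    intro S1 hS1 S2 hS2 he
    obtain ⟨hsub1, hc1⟩ := Finset.mem_powersetCard.1 (Finset.mem_filter.1 hS1).1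
    obtain ⟨hsub2, hc2⟩ := Finset.mem_powersetCard.1 (Finset.mem_filter.1 hS2).1
    have hsp1 := (Finset.mem_filter.1 hS1).2
    have hsp2 := (Finset.mem_filter.1 hS2).2
    have hT : fwdMap m s S1 hc1 = fwdMap m s S2 hc2 := he
    have hcT : (fwdMap m s S1 hc1).card = s := fwd_card hm hc1 hsp1
    have hu1 : (fun k : Fin s => S1.orderEmbOfFin hc1 k - k.1 * (m - 1))
        = (fwdMap m s S1 hc1).orderEmbOfFin hcT :=
      Finset.orderEmbOfFin_unique hcT
        (fun x => Finset.mem_image_of_mem _ (Finset.mem_univ x)) (fwd_strictMono hm hc1 hsp1)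
    have hu2 : (fun k : Fin s => S2.orderEmbOfFin hc2 k - k.1 * (m - 1))
        = (fwdMap m s S1 hc1).orderEmbOfFin hcT :=
      Finset.orderEmbOfFin_unique hcT
        (fun x => by rw [hT]; exact Finset.mem_image_of_mem _ (Finset.mem_univ x))
        (fwd_strictMono hm hc2 hsp2)
    have hg : ∀ k : Fin s, S1.orderEmbOfFin hc1 k - k.1 * (m - 1)
        = S2.orderEmbOfFin hc2 k - k.1 * (m - 1) := by
      intro k
      rw [congrFun hu1 k, congrFun hu2 k]
    have hf : ∀ k : Fin s, S1.orderEmbOfFin hc1 k = S2.orderEmbOfFin hc2 k := by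
      intro k
      have h1 := growth0 hc1 hsp1 k
      have h2 := growth0 hc2 hsp2 k
      have e1 := emul hm k.1
      have := hg k
      omega
    rw [← image_orderEmbOfFin S1 hc1, ← image_orderEmbOfFin S2 hc2]
    exact Finset.image_congr (fun k _ => hf k)
  · -- surjectivity
    intro T hT
    obtain ⟨hTsub, hcT⟩ := Finset.mem_powersetCard.1 hT
    set h := T.orderEmbOfFin hcT with hhdef
    set f : Fin s → ℕ := fun k => h k + k.1 * (m - 1) with hfdef
    have hfmono : StrictMono f := by
      intro a b hab
      have h1 : h a < h b := h.strictMono hab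
      have h2 : a.1 * (m - 1) ≤ b.1 * (m - 1) :=
        Nat.mul_le_mul_right _ (le_of_lt (Fin.lt_def.1 hab))
      simp only [hfdef]
      omega
    set S : Finset ℕ := Finset.image f Finset.univ with hSdef
    have hcS : S.card = s := by
      rw [hSdef, Finset.card_image_of_injective _ hfmono.injective,
        Finset.card_univ, Fintype.card_fin]
    have hsubS : S ⊆ Finset.range (n + 1 - m) := by
      intro y hy
      obtain ⟨k, -, rfl⟩ := Finset.mem_image.1 hy
      rw [Finset.mem_range]
      have hr : h k < n - s * m + s := Finset.mem_range.1 (hTsub (T.orderEmbOfFin_mem hcT k))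
      have e1 := emul hm k.1
      have e6 : (s - 1 - k.1) * (m - 1) + k.1 * (m - 1) = (s - 1) * (m - 1) := by
        rw [← Nat.add_mul]; congr 1; have := k.2; omega
      have e7 := emul hm (s - 1)
      have e5 : s * m = (s - 1) * m + m := by
        cases s with
        | zero => exact absurd k.2 (by omega)
        | succ s' => simp [Nat.succ_mul]
      simp only [hfdef]
      omega
    have hspS : spacedS m S := by
      intro i hi j hj hij
      obtain ⟨a, -, rfl⟩ := Finset.mem_image.1 hi
      obtain ⟨b, -, rfl⟩ := Finset.mem_image.1 hj
      have hab : a < b := by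
        rcases lt_trichotomy a b with hh | hh | hh
        · exact hh
        · subst hh; omega
        · exact absurd (hfmono hh) (by omega)
      have h1 : h a < h b := h.strictMono hab
      have h2 : (a.1 + 1) * (m - 1) ≤ b.1 * (m - 1) :=
        Nat.mul_le_mul_right _ (Fin.lt_def.1 hab)
      have e : (a.1 + 1) * (m - 1) = a.1 * (m - 1) + (m - 1) := by
        rw [Nat.add_mul, one_mul]
      simp only [hfdef]
      omega
    refine ⟨S, Finset.mem_filter.2 ⟨Finset.mem_powersetCard.2 ⟨hsubS, hcS⟩, hspS⟩, ?_⟩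
    show fwdMap m s S hcS = T
    have hu : (fun k : Fin s => f k) = S.orderEmbOfFin hcS :=
      Finset.orderEmbOfFin_unique hcS
        (fun x => Finset.mem_image_of_mem _ (Finset.mem_univ x)) hfmono
    have hfun : (fun k : Fin s => S.orderEmbOfFin hcS k - k.1 * (m - 1))
        = fun k : Fin s => h k := by
      funext k
      rw [← congrFun hu k]
      simp only [hfdef]
      omega
    rw [fwdMap, hfun]
    exact image_orderEmbOfFin T hcT

/-- All moments of the occurrence count of a nonoverlapping word:
`E[N^t] = Σ_{s=1}^{min(⌊n/|w|⌋,t)} A_{t,s}·C(n-s|w|+s, s)·P(w)^s`. -/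
theorem stmt3 {A : Type*} [Fintype A] [DecidableEq A] (P : A → ℝ)
    (hP0 : ∀ a, 0 ≤ P a) (hP1 : ∑ a, P a = 1)
    (n : ℕ) (w : List A) (hw : w ≠ []) (hno : Nonoverlapping w)
    (t : ℕ) (ht : 1 ≤ t) :
    (∑ x : Fin n → A, (occCount w (List.ofFn x) : ℝ) ^ t * ∏ i, P (x i)) =
      ∑ s ∈ Finset.Icc 1 (min (n / w.length) t),
        (∑ r ∈ Finset.range (s + 1),
            (-1 : ℝ) ^ (s - r) * (s.choose r : ℕ) * (r : ℝ) ^ t) *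
          ((n - s * w.length + s).choose s : ℕ) * wordProb P w ^ s := by
  have hm1 : 1 ≤ w.length := List.length_pos_iff.2 hw
  -- occurrence count as a Finset card
  have hN : ∀ x : Fin n → A, occCount w (List.ofFn x)
      = ((Finset.range (n + 1 - w.length)).filter
          (fun i => List.take w.length (List.drop i (List.ofFn x)) = w)).card := by
    intro x
    rw [occCount_eq]
    simp only [List.length_ofFn]
  -- choose of the count as a sum of indicators over subsets
  have hchoose : ∀ (x : Fin n → A) (s : ℕ),
      (occCount w (List.ofFn x)).choose s
        = (((Finset.range (n + 1 - w.length)).powersetCard s).filter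
            (fun S => S ⊆ (Finset.range (n + 1 - w.length)).filter
              (fun i => List.take w.length (List.drop i (List.ofFn x)) = w))).card := by
    intro x s
    rw [hN x, ← Finset.card_powersetCard]
    congr 1
    ext T
    simp only [Finset.mem_powersetCard, Finset.mem_filter]
    constructor
    · rintro ⟨h1, h2⟩
      exact ⟨⟨h1.trans (Finset.filter_subset _ _), h2⟩, h1⟩
    · rintro ⟨⟨_, h2⟩, h3⟩
      exact ⟨h3, h2⟩
  -- the key per-s computation
  have key : ∀ s : ℕ,
      ∑ x : Fin n → A, ((occCount w (List.ofFn x)).choose s : ℝ) * ∏ i, P (x i)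
        = ((((Finset.range (n + 1 - w.length)).powersetCard s).filter
            (spacedS w.length)).card : ℝ) * wordProb P w ^ s := by
    intro s
    have e1 : ∀ x : Fin n → A,
        ((occCount w (List.ofFn x)).choose s : ℝ) * ∏ i, P (x i)
          = ∑ S ∈ (Finset.range (n + 1 - w.length)).powersetCard s,
              (if ∀ i ∈ S, List.take w.length (List.drop i (List.ofFn x)) = w
                then ∏ i, P (x i) else 0) := by
      intro x
      rw [hchoose x s, Finset.card_filter, Nat.cast_sum, Finset.sum_mul]
      refine Finset.sum_congr rfl fun S hS => ?_
      have hSI : S ⊆ Finset.range (n + 1 - w.length) :=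
        (Finset.mem_powersetCard.1 hS).1
      have hiff : (S ⊆ (Finset.range (n + 1 - w.length)).filter
            (fun i => List.take w.length (List.drop i (List.ofFn x)) = w))
          ↔ (∀ i ∈ S, List.take w.length (List.drop i (List.ofFn x)) = w) := by
        constructor
        · intro h i hi
          exact (Finset.mem_filter.1 (h hi)).2
        · intro h i hi
          exact Finset.mem_filter.2 ⟨hSI hi, h i hi⟩
      by_cases hc : S ⊆ (Finset.range (n + 1 - w.length)).filter
          (fun i => List.take w.length (List.drop i (List.ofFn x)) = w)
      · rw [if_pos hc, if_pos (hiff.1 hc)]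
        simp
      · rw [if_neg hc, if_neg (fun hh => hc (hiff.2 hh))]
        simp
    rw [Finset.sum_congr rfl fun x _ => e1 x, Finset.sum_comm]
    have e2 : ∀ S ∈ (Finset.range (n + 1 - w.length)).powersetCard s,
        (∑ x : Fin n → A,
          (if ∀ i ∈ S, List.take w.length (List.drop i (List.ofFn x)) = w
            then ∏ i, P (x i) else 0))
          = if spacedS w.length S then wordProb P w ^ s else 0 := by
      intro S hS
      obtain ⟨hsub, hc⟩ := Finset.mem_powersetCard.1 hS
      by_cases hsp : spacedS w.length S
      · rw [if_pos hsp, ← hc]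
        exact prob_spaced P hP1 w hw n S hsub hsp
      · rw [if_neg hsp]
        exact prob_not_spaced P w hw hno n S hsub hsp
    rw [Finset.sum_congr rfl e2, Finset.sum_ite, Finset.sum_const, Finset.sum_const_zero,
      add_zero, nsmul_eq_mul]
  -- expand the power using the surjection identity
  have expand : ∀ x : Fin n → A, ((occCount w (List.ofFn x) : ℝ)) ^ t
      = ∑ s ∈ Finset.range (t + 1),
          surR t s * ((occCount w (List.ofFn x)).choose s : ℕ) :=
    fun x => pow_eq_sum t _
  calc (∑ x : Fin n → A, (occCount w (List.ofFn x) : ℝ) ^ t * ∏ i, P (x i))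
      = ∑ x : Fin n → A, ∑ s ∈ Finset.range (t + 1),
          surR t s * ((occCount w (List.ofFn x)).choose s : ℝ) * ∏ i, P (x i) := by
        refine Finset.sum_congr rfl fun x _ => ?_
        rw [expand x, Finset.sum_mul]
    _ = ∑ s ∈ Finset.range (t + 1), ∑ x : Fin n → A,
          surR t s * ((occCount w (List.ofFn x)).choose s : ℝ) * ∏ i, P (x i) :=
        Finset.sum_comm
    _ = ∑ s ∈ Finset.range (t + 1),
          surR t s * (((((Finset.range (n + 1 - w.length)).powersetCard s).filter
            (spacedS w.length)).card : ℝ) * wordProb P w ^ s) := by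
        refine Finset.sum_congr rfl fun s _ => ?_
        rw [← key s, Finset.mul_sum]
        refine Finset.sum_congr rfl fun x _ => ?_
        ring
    _ = ∑ s ∈ Finset.Icc 1 (min (n / w.length) t),
        (∑ r ∈ Finset.range (s + 1),
            (-1 : ℝ) ^ (s - r) * (s.choose r : ℕ) * (r : ℝ) ^ t) *
          ((n - s * w.length + s).choose s : ℕ) * wordProb P w ^ s := by
        rw [Finset.range_eq_Ico, Finset.sum_eq_sum_Ico_succ_bot (by omega : 0 < t + 1)]
        simp only [← Finset.range_eq_Ico, zero_add]
        have h0 : surR t 0 = 0 := by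
          rw [surR]
          simp [zero_pow (by omega : t ≠ 0)]
        rw [h0, zero_mul, zero_add, Finset.Ico_add_one_right_eq_Icc]
        have hsub2 : Finset.Icc 1 (min (n / w.length) t) ⊆ Finset.Icc 1 t := by
          intro s hs
          simp only [Finset.mem_Icc] at hs ⊢
          omega
        have hvanish : ∀ s ∈ Finset.Icc 1 t, s ∉ Finset.Icc 1 (min (n / w.length) t) →
            surR t s * (((((Finset.range (n + 1 - w.length)).powersetCard s).filter
              (spacedS w.length)).card : ℝ) * wordProb P w ^ s) = 0 := by
          intro s hs hs2
          simp only [Finset.mem_Icc] at hs hs2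
          have hdiv : n / w.length < s := by omega
          have hgt : ¬ (s * w.length ≤ n) := by
            intro hle
            exact absurd ((Nat.le_div_iff_mul_le (by omega)).2 hle) (by omega)
          have hz : ((((Finset.range (n + 1 - w.length)).powersetCard s).filter
              (spacedS w.length)).card : ℕ) = 0 := by
            rw [Finset.card_eq_zero, Finset.filter_eq_empty_iff]
            intro S hS hsp
            obtain ⟨hsubS, hcS⟩ := Finset.mem_powersetCard.1 hS
            exact hgt (spaced_bound hm1 hsubS hcS hsp (by omega))
          rw [hz]
          simp
        rw [← Finset.sum_subset hsub2 hvanish]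
        refine Finset.sum_congr rfl fun s hs => ?_
        simp only [Finset.mem_Icc] at hs
        have hsm : s * w.length ≤ n :=
          (Nat.le_div_iff_mul_le (by omega)).1 (by omega)
        rw [card_spaced hm1 hsm]
        rw [show (∑ r ∈ Finset.range (s + 1),
            (-1 : ℝ) ^ (s - r) * (s.choose r : ℕ) * (r : ℝ) ^ t) = surR t s from rfl]
        ring
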